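/- Let T be a finite rooted tree and let S ⊆ V(T) be a nonempty set of nodes. Then the least-common-ancestor closure of S, i.e., the smallest set M with S ⊆ M ⊆ V(T) such that the least common ancestor of any two nodes of M belongs to M, satisfies |M| ≤ 2|S|. -/

import Mathlib

/-!
In the ancestor order of a rooted tree the ancestors of any node form a chain and the least
common ancestor is the meet, so it suffices to bound meet closures in such a semilattice.
Adding a point `a` to a finite meet-closed set `t` costs at most one further point: the deepest
of the meets `a ⊓ x` with `x ∈ t`, `b = a ⊓ x₀`, since every other `a ⊓ x` is either `b` or
`x₀ ⊓ x ∈ t`, and `b ⊓ x = a ⊓ x`. Hence each point of `S` adds at most two points to the closure.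
-/

/-- In a tree `T` rooted at `root`, `u` is an ancestor of `v` if `u` lies on every
(equivalently, by uniqueness of paths in a tree, on the) path from `root` to `v`.
Every node is an ancestor of itself. -/
def IsAncestor {V : Type*} (T : SimpleGraph V) (root u v : V) : Prop :=
  ∀ p : T.Walk root v, p.IsPath → u ∈ p.support

/-- In a tree `T` rooted at `root`, `m` is the least common ancestor of `u` and `v` if it is
a common ancestor of `u` and `v` of greatest depth (depth being the distance from the root). -/
def IsLCA {V : Type*} (T : SimpleGraph V) (root u v m : V) : Prop :=
  IsAncestor T root m u ∧ IsAncestor T root m v ∧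
    ∀ w : V, IsAncestor T root w u → IsAncestor T root w v →
      T.dist root w ≤ T.dist root m

section TreeLike

variable {α : Type*} [SemilatticeInf α] {s : Set α} {a : α}

lemma InfClosed.insert_of_forall_inf_mem (hs : InfClosed s) (h : ∀ x ∈ s, a ⊓ x ∈ insert a s) :
    InfClosed (insert a s) := by
  rintro u (rfl | hu) v (rfl | hv)
  · simp
  · exact h v hv
  · rw [inf_comm]; exact h u hu
  · exact Set.mem_insert_of_mem _ (hs hu hv)

variable (hchain : ∀ a : α, IsChain (· ≤ ·) (Set.Iic a))
include hchain

lemma InfClosed.exists_infClosed_insert_insert (hs : InfClosed s) (hfin : s.Finite) (a : α) :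
    ∃ b, InfClosed (insert a (insert b s)) := by
  rcases s.eq_empty_or_nonempty with rfl | hne
  · exact ⟨a, by simp⟩
  obtain ⟨x₀, hx₀, hmax⟩ := hfin.exists_maximalFor (a ⊓ ·) s hne
  set b := a ⊓ x₀
  have hle : ∀ x ∈ s, a ⊓ x ≤ b := fun x hx =>
    ((hchain a).total inf_le_left inf_le_left).elim (hmax hx) id
  have hb_inf : ∀ x ∈ s, b ⊓ x = a ⊓ x := fun x hx =>
    le_antisymm (inf_le_inf_right _ inf_le_left) (le_inf (hle x hx) inf_le_right)
  have ha_inf : ∀ x ∈ s, a ⊓ x ∈ insert b s := by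
    intro x hx
    rcases (hchain x₀).total (inf_le_left : x₀ ⊓ x ≤ x₀) (inf_le_right : b ≤ x₀) with h | h
    · have : a ⊓ x = x₀ ⊓ x := le_antisymm (le_inf ((hle x hx).trans inf_le_right) inf_le_right)
        (le_inf (h.trans inf_le_left) inf_le_right)
      exact this ▸ Set.mem_insert_of_mem _ (hs hx₀ hx)
    · have : a ⊓ x = b := le_antisymm (hle x hx) (le_inf inf_le_left (h.trans inf_le_right))
      exact this ▸ Set.mem_insert _ _
  have hb : InfClosed (insert b s) :=
    hs.insert_of_forall_inf_mem fun x hx => hb_inf x hx ▸ ha_inf x hx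
  refine ⟨b, hb.insert_of_forall_inf_mem ?_⟩
  rintro x (rfl | hx)
  · rw [inf_of_le_right inf_le_left]
    exact Set.mem_insert_of_mem _ (Set.mem_insert _ _)
  · exact Set.mem_insert_of_mem _ (ha_inf x hx)

theorem Set.Finite.ncard_infClosure_le (hs : s.Finite) : (infClosure s).ncard ≤ 2 * s.ncard := by
  induction s, hs using Set.Finite.induction_on with
  | empty => simp
  | @insert a s ha hs ih =>
    obtain ⟨b, hb⟩ := infClosed_infClosure.exists_infClosed_insert_insert hchain hs.infClosure a
    have hsub : infClosure (insert a s) ⊆ insert a (insert b (infClosure s)) :=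
      infClosure_min (Set.insert_subset_insert (subset_infClosure.trans (Set.subset_insert _ _))) hb
    calc (infClosure (insert a s)).ncard
        ≤ (insert a (insert b (infClosure s))).ncard :=
          Set.ncard_le_ncard hsub ((hs.infClosure.insert b).insert a)
      _ ≤ (infClosure s).ncard + 2 :=
          (Set.ncard_insert_le _ _).trans (Nat.add_le_add_right (Set.ncard_insert_le _ _) 1)
      _ ≤ 2 * (insert a s).ncard := by rw [Set.ncard_insert_of_notMem ha hs]; omega

end TreeLike

section Ancestor

open SimpleGraph

variable {V : Type*} {T : SimpleGraph V} {root u v w m : V}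

lemma IsAncestor.refl (T : SimpleGraph V) (root v : V) : IsAncestor T root v v :=
  fun p _ => p.end_mem_support

lemma IsAncestor.trans (huw : IsAncestor T root u w) (hwv : IsAncestor T root w v) :
    IsAncestor T root u v := by
  classical
  intro p hp
  exact p.support_takeUntil_subset_support (hwv p hp) (huw _ (hp.takeUntil _))

lemma IsAncestor.dist_le (hT : T.Connected) (h : IsAncestor T root u v) :
    T.dist root u ≤ T.dist root v := by
  classical
  obtain ⟨p, hp, hlen⟩ := hT.exists_path_of_dist root v
  calc T.dist root u ≤ (p.takeUntil u (h p hp)).length := T.dist_le _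
    _ ≤ p.length := p.length_takeUntil_le_length _
    _ = T.dist root v := hlen

lemma IsAncestor.eq_of_dist_le (hT : T.Connected) (h : IsAncestor T root u v)
    (hd : T.dist root v ≤ T.dist root u) : u = v := by
  classical
  obtain ⟨p, hp, hlen⟩ := hT.exists_path_of_dist root v
  have hu := h p hp
  have hsplit := congrArg Walk.length (p.take_spec hu)
  rw [Walk.length_append] at hsplit
  have htake := T.dist_le (p.takeUntil u hu)
  exact Walk.eq_of_length_eq_zero (p := p.dropUntil u hu) (by omega)

lemma IsAncestor.antisymm (hT : T.Connected) (huv : IsAncestor T root u v)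
    (hvu : IsAncestor T root v u) : u = v :=
  huv.eq_of_dist_le hT (hvu.dist_le hT)

lemma isAncestor_iff_mem_support (hT : T.IsTree) {p : T.Walk root v} (hp : p.IsPath) :
    IsAncestor T root u v ↔ u ∈ p.support :=
  ⟨fun h => h p hp, fun hu _ hq => (hT.existsUnique_path root v).unique hq hp ▸ hu⟩

lemma IsAncestor.total (hT : T.IsTree) (hu : IsAncestor T root u v)
    (hw : IsAncestor T root w v) : IsAncestor T root u w ∨ IsAncestor T root w u := by
  classical
  obtain ⟨p, hp⟩ := (hT.existsUnique_path root v).exists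
  have hprefix : ∀ x (hx : x ∈ p.support), (p.takeUntil x hx).support <+: p.support :=
    fun x hx => ⟨_, by rw [← Walk.support_append, p.take_spec]⟩
  rw [isAncestor_iff_mem_support hT (hp.takeUntil (hw p hp)),
    isAncestor_iff_mem_support hT (hp.takeUntil (hu p hp))]
  rcases List.prefix_or_prefix_of_prefix (hprefix u (hu p hp)) (hprefix w (hw p hp)) with h | h
  · exact .inl (h.subset (Walk.end_mem_support _))
  · exact .inr (h.subset (Walk.end_mem_support _))

lemma exists_isLCA (hT : T.IsTree) (root u v : V) : ∃ m, IsLCA T root u v m := by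
  classical
  obtain ⟨p, hp⟩ := (hT.existsUnique_path root u).exists
  let common := p.support.toFinset.filter fun w => IsAncestor T root w u ∧ IsAncestor T root w v
  have hroot : root ∈ common := Finset.mem_filter.2 ⟨List.mem_toFinset.2 p.start_mem_support,
    fun q _ => q.start_mem_support, fun q _ => q.start_mem_support⟩
  obtain ⟨m, hm, hmax⟩ := common.exists_max_image (T.dist root) ⟨root, hroot⟩
  simp only [common, Finset.mem_filter, List.mem_toFinset] at hm hmax
  exact ⟨m, hm.2.1, hm.2.2, fun w hwu hwv => hmax w ⟨hwu p hp, hwu, hwv⟩⟩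

lemma IsLCA.isAncestor_of_isAncestor (hT : T.IsTree) (hm : IsLCA T root u v m)
    (hwu : IsAncestor T root w u) (hwv : IsAncestor T root w v) : IsAncestor T root w m := by
  rcases hwu.total hT hm.1 with h | h
  · exact h
  · rw [h.eq_of_dist_le hT.connected (hm.2.2 w hwu hwv)]
    exact .refl T root w

noncomputable abbrev SimpleGraph.IsTree.ancestorSemilatticeInf (hT : T.IsTree) (root : V) :
    SemilatticeInf V where
  le := IsAncestor T root
  le_refl := IsAncestor.refl T root
  le_trans _ _ _ := IsAncestor.trans
  le_antisymm _ _ := IsAncestor.antisymm hT.connected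
  inf u v := (exists_isLCA hT root u v).choose
  inf_le_left u v := (exists_isLCA hT root u v).choose_spec.1
  inf_le_right u v := (exists_isLCA hT root u v).choose_spec.2.1
  le_inf _ u v hu hv := (exists_isLCA hT root u v).choose_spec.isAncestor_of_isAncestor hT hu hv

end Ancestor

theorem lca_closure_card_le_general {V : Type*} [Fintype V]
    (T : SimpleGraph V) (hT : T.IsTree) (root : V)
    (S : Set V)
    (M : Set V)
    (hmin : ∀ M' : Set V, S ⊆ M' →
      (∀ u ∈ M', ∀ v ∈ M', ∀ m : V, IsLCA T root u v m → m ∈ M') → M ⊆ M') :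
    M.ncard ≤ 2 * S.ncard := by
  let := hT.ancestorSemilatticeInf root
  have hchain : ∀ a : V, IsChain (· ≤ ·) (Set.Iic a) :=
    fun _ _ hu _ hw _ => IsAncestor.total hT hu hw
  have hlca : ∀ {u v m : V}, IsLCA T root u v m → m = u ⊓ v := fun {u v _} hm =>
    le_antisymm (le_inf hm.1 hm.2.1)
      (hm.isAncestor_of_isAncestor hT (inf_le_left : u ⊓ v ≤ u) (inf_le_right : u ⊓ v ≤ v))
  have hM : M ⊆ infClosure S :=
    hmin _ subset_infClosure fun u hu v hv m hm => hlca hm ▸ infClosed_infClosure hu hv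
  calc M.ncard ≤ (infClosure S).ncard := Set.ncard_le_ncard hM (Set.toFinite _)
    _ ≤ 2 * S.ncard := (Set.toFinite S).ncard_infClosure_le hchain

/-- Let `T` be a finite rooted tree and `S` a nonempty set of nodes.  Then the least common
ancestor closure of `S`, i.e. the smallest set `M` with `S ⊆ M ⊆ V(T)` closed under taking
least common ancestors of pairs of its elements, has size at most `2|S|`. -/
theorem lca_closure_card_le {V : Type*} [Fintype V]
    (T : SimpleGraph V) (hT : T.IsTree) (root : V)
    (S : Set V) (hS : S.Nonempty)
    (M : Set V) (hSM : S ⊆ M)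
    (hclosed : ∀ u ∈ M, ∀ v ∈ M, ∀ m : V, IsLCA T root u v m → m ∈ M)
    (hmin : ∀ M' : Set V, S ⊆ M' →
      (∀ u ∈ M', ∀ v ∈ M', ∀ m : V, IsLCA T root u v m → m ∈ M') → M ⊆ M') :
    M.ncard ≤ 2 * S.ncard :=
  lca_closure_card_le_general T hT root S M hmin
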